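/- For every ν ∈ ℝ, the function u ↦ u²·K_ν'(u) is strictly increasing on the interval (2, ∞). -/

import Mathlib

open Real MeasureTheory Set

lemma cosh_quad (t : ℝ) (ht : 0 ≤ t) : 1 + t^2/8 ≤ Real.cosh t := by
  have h1 : t/2 + 1 ≤ Real.exp (t/2) := Real.add_one_le_exp (t/2)
  have h2 : -t + 1 ≤ Real.exp (-t) := Real.add_one_le_exp (-t)
  have h3 : Real.exp (t/2) * Real.exp (t/2) = Real.exp t := by
    rw [← Real.exp_add]; ring_nf
  rw [Real.cosh_eq]
  nlinarith [Real.exp_pos (t/2)]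

lemma cosh_le_exp_abs (x : ℝ) : Real.cosh x ≤ Real.exp |x| := by
  rw [Real.cosh_eq]
  rcases abs_cases x with ⟨h, h0⟩ | ⟨h, h0⟩ <;> rw [h]
  · nlinarith [Real.exp_le_exp.2 (by linarith : -x ≤ x)]
  · nlinarith [Real.exp_le_exp.2 (by linarith : x ≤ -x)]

noncomputable def besselJ (ν : ℝ) (n : ℕ) (u : ℝ) : ℝ :=
  ∫ t in Ioi (0:ℝ), Real.exp (-u * Real.cosh t) * Real.cosh t ^ n * Real.cosh (ν * t)

lemma besselAux_integrable (ν : ℝ) (n : ℕ) {u : ℝ} (hu : 0 < u) :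
    IntegrableOn (fun t => Real.exp (-u * Real.cosh t) * Real.cosh t ^ n * Real.cosh (ν * t))
      (Ioi 0) := by
  set a : ℝ := n + |ν| with ha_def
  have ha : 0 ≤ a := by positivity
  have hcont : Continuous fun t : ℝ =>
      Real.exp (-u * Real.cosh t) * Real.cosh t ^ n * Real.cosh (ν * t) := by continuity
  have hg : Integrable (fun t : ℝ =>
      Real.exp (-u + 2*a^2/u) * Real.exp (-(u/8) * (t - 4*a/u)^2)) :=
    ((integrable_exp_neg_mul_sq (by positivity : (0:ℝ) < u/8)).comp_sub_right (4*a/u)).const_mul _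
  refine Integrable.mono' hg.integrableOn hcont.aestronglyMeasurable ?_
  rw [ae_restrict_iff' measurableSet_Ioi]
  filter_upwards with t ht
  have ht' : (0:ℝ) ≤ t := le_of_lt ht
  have hc0 : (0:ℝ) ≤ Real.cosh t := (Real.cosh_pos (x := t)).le
  have e1 : Real.exp (-u * Real.cosh t) ≤ Real.exp (-u * (1 + t^2/8)) :=
    Real.exp_le_exp.2 (by nlinarith [cosh_quad t ht'])
  have e2 : Real.cosh t ^ n ≤ Real.exp ((n:ℝ) * t) := by
    calc Real.cosh t ^ n ≤ Real.exp |t| ^ n :=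
          pow_le_pow_left₀ hc0 (cosh_le_exp_abs t) n
      _ = Real.exp ((n:ℝ) * t) := by
          rw [← Real.exp_nat_mul, abs_of_nonneg ht']
  have e3 : Real.cosh (ν * t) ≤ Real.exp (|ν| * t) := by
    calc Real.cosh (ν * t) ≤ Real.exp |ν * t| := cosh_le_exp_abs _
      _ = Real.exp (|ν| * t) := by rw [abs_mul, abs_of_nonneg ht']
  have key : Real.exp (-u * Real.cosh t) * Real.cosh t ^ n * Real.cosh (ν * t)
      ≤ Real.exp (-u + 2*a^2/u) * Real.exp (-(u/8) * (t - 4*a/u)^2) := by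
    calc Real.exp (-u * Real.cosh t) * Real.cosh t ^ n * Real.cosh (ν * t)
        ≤ Real.exp (-u * (1 + t^2/8)) * Real.exp ((n:ℝ) * t) * Real.exp (|ν| * t) := by
          gcongr
      _ = Real.exp (-u + 2*a^2/u) * Real.exp (-(u/8) * (t - 4*a/u)^2) := by
          rw [← Real.exp_add, ← Real.exp_add, ← Real.exp_add]
          congr 1
          field_simp
          ring
  have hpos : 0 ≤ Real.exp (-u * Real.cosh t) * Real.cosh t ^ n * Real.cosh (ν * t) := by
    positivity
  rwa [Real.norm_eq_abs, abs_of_nonneg hpos]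

lemma hasDerivAt_besselJ (ν : ℝ) (n : ℕ) {u : ℝ} (hu : 0 < u) :
    HasDerivAt (besselJ ν n) (-(besselJ ν (n+1) u)) u := by
  have h := hasDerivAt_integral_of_dominated_loc_of_deriv_le
    (μ := volume.restrict (Ioi (0:ℝ)))
    (F := fun (x : ℝ) (t : ℝ) => Real.exp (-x * Real.cosh t) * Real.cosh t ^ n * Real.cosh (ν * t))
    (F' := fun (x : ℝ) (t : ℝ) =>
      -(Real.exp (-x * Real.cosh t) * Real.cosh t ^ (n+1) * Real.cosh (ν * t)))
    (x₀ := u)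
    (bound := fun t => Real.exp (-(u/2) * Real.cosh t) * Real.cosh t ^ (n+1) * Real.cosh (ν * t))
    (Metric.ball_mem_nhds u (half_pos hu))
    (Filter.Eventually.of_forall fun x => (by continuity :
      Continuous fun t : ℝ => Real.exp (-x * Real.cosh t) * Real.cosh t ^ n * Real.cosh (ν * t)).aestronglyMeasurable)
    (besselAux_integrable ν n hu)
    ((by continuity : Continuous fun t : ℝ =>
      -(Real.exp (-u * Real.cosh t) * Real.cosh t ^ (n+1) * Real.cosh (ν * t))).aestronglyMeasurable)
    ?_ (besselAux_integrable ν (n+1) (half_pos hu)) ?_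
  · obtain ⟨-, hd⟩ := h
    have : (∫ t in Ioi (0:ℝ),
        -(Real.exp (-u * Real.cosh t) * Real.cosh t ^ (n+1) * Real.cosh (ν * t)))
        = -(besselJ ν (n+1) u) := by
      rw [besselJ, ← integral_neg]
    rw [this] at hd
    exact hd
  · rw [ae_restrict_iff' measurableSet_Ioi]
    filter_upwards with t ht x hx
    have hc1 : (1:ℝ) ≤ Real.cosh t := Real.one_le_cosh t
    have hx2 : u/2 < x := by
      rw [Metric.mem_ball, Real.dist_eq, abs_lt] at hx
      linarith [hx.1]
    have : Real.exp (-x * Real.cosh t) ≤ Real.exp (-(u/2) * Real.cosh t) :=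
      Real.exp_le_exp.2 (by nlinarith)
    have hnn : (0:ℝ) ≤ Real.cosh t ^ (n+1) * Real.cosh (ν * t) := by positivity
    rw [norm_neg, Real.norm_eq_abs, abs_of_nonneg (by positivity)]
    calc Real.exp (-x * Real.cosh t) * Real.cosh t ^ (n+1) * Real.cosh (ν * t)
        ≤ Real.exp (-(u/2) * Real.cosh t) * Real.cosh t ^ (n+1) * Real.cosh (ν * t) := by
          gcongr
      _ = _ := rfl
  · filter_upwards with t x _
    have d1 : HasDerivAt (fun x : ℝ => -x * Real.cosh t) (-Real.cosh t) x := by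
      simpa using (hasDerivAt_id x).neg.mul_const (Real.cosh t)
    have d2 := ((d1.exp).mul_const (Real.cosh t ^ n)).mul_const (Real.cosh (ν * t))
    refine d2.congr_deriv ?_
    ring

lemma besselJ_pos (ν : ℝ) (n : ℕ) {u : ℝ} (hu : 0 < u) : 0 < besselJ ν n u := by
  have hpos : ∀ t : ℝ,
      0 < Real.exp (-u * Real.cosh t) * Real.cosh t ^ n * Real.cosh (ν * t) := by
    intro t
    have := Real.cosh_pos (x := t)
    have := Real.cosh_pos (x := ν * t)
    positivity
  rw [besselJ]
  refine (setIntegral_pos_iff_support_of_nonneg_ae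
    (Filter.Eventually.of_forall fun t => (hpos t).le)
    (besselAux_integrable ν n hu)).2 ?_
  have hsupp : Function.support (fun t =>
      Real.exp (-u * Real.cosh t) * Real.cosh t ^ n * Real.cosh (ν * t)) = univ :=
    Set.eq_univ_of_forall fun t => (hpos t).ne'
  rw [hsupp, Set.univ_inter, Real.volume_Ioi]
  exact ENNReal.zero_lt_top

lemma besselD_pos (ν : ℝ) {u : ℝ} (hu : 2 < u) :
    0 < 2*u*(-(besselJ ν 1 u)) + u^2 * besselJ ν 2 u := by
  have hu0 : (0:ℝ) < u := lt_trans two_pos hu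
  have key : u*(u-2) * besselJ ν 0 u ≤ u^2 * besselJ ν 2 u - 2*u*besselJ ν 1 u := by
    rw [besselJ, besselJ, besselJ, ← integral_const_mul, ← integral_const_mul,
      ← integral_const_mul,
      ← integral_sub ((besselAux_integrable ν 2 hu0).const_mul _)
        ((besselAux_integrable ν 1 hu0).const_mul _)]
    refine integral_mono_ae ((besselAux_integrable ν 0 hu0).const_mul _)
      (((besselAux_integrable ν 2 hu0).const_mul _).sub
        ((besselAux_integrable ν 1 hu0).const_mul _))
      (Filter.Eventually.of_forall fun t => ?_)
    have hc : 1 ≤ Real.cosh t := Real.one_le_cosh t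
    have hE : 0 < Real.exp (-u*Real.cosh t) * Real.cosh (ν*t) := by
      have := Real.cosh_pos (x := ν * t)
      positivity
    have fact : u*(u-2) ≤ u^2*Real.cosh t^2 - 2*u*Real.cosh t := by
      nlinarith [mul_nonneg (mul_nonneg hu0.le (sub_nonneg.2 hc))
        (show (0:ℝ) ≤ u * Real.cosh t + u - 2 by nlinarith)]
    have := mul_le_mul_of_nonneg_right fact hE.le
    simp only [pow_zero, pow_one]
    nlinarith [this]
  have hJ0 : 0 < besselJ ν 0 u := besselJ_pos ν 0 hu0
  nlinarith [mul_pos (mul_pos hu0 (by linarith : (0:ℝ) < u - 2)) hJ0]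

/-- The modified Bessel function of the second kind of order `ν`. -/
noncomputable def besselK (ν u : ℝ) : ℝ :=
  ∫ t in Ioi (0 : ℝ), Real.exp (-u * Real.cosh t) * Real.cosh (ν * t)

theorem sq_mul_besselK_deriv_strictMono_on_Ioi_two (ν : ℝ) :
    StrictMonoOn (fun u : ℝ => u ^ 2 * deriv (besselK ν) u) (Ioi 2) := by
  have hKeq : besselK ν = besselJ ν 0 := by
    funext u
    simp [besselK, besselJ]
  have hderiv : ∀ u ∈ Ioi (2:ℝ), HasDerivAt (fun u : ℝ => u^2 * (-(besselJ ν 1 u)))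
      (2*u*(-(besselJ ν 1 u)) + u^2 * besselJ ν 2 u) u := by
    intro u hu
    have hu0 : (0:ℝ) < u := lt_trans two_pos hu
    have h1 := (hasDerivAt_besselJ ν 1 hu0).neg
    have h2 := (hasDerivAt_pow 2 u).mul h1
    refine h2.congr_deriv ?_
    push_cast
    simp only [Pi.neg_apply]
    ring
  have hg : StrictMonoOn (fun u : ℝ => u^2 * (-(besselJ ν 1 u))) (Ioi 2) := by
    apply strictMonoOn_of_deriv_pos (convex_Ioi 2)
    · intro u hu
      exact (hderiv u hu).continuousAt.continuousWithinAt
    · intro u hu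
      rw [interior_Ioi] at hu
      rw [(hderiv u hu).deriv]
      exact besselD_pos ν hu
  have e : ∀ u ∈ Ioi (2:ℝ), u^2 * deriv (besselK ν) u = u^2 * (-(besselJ ν 1 u)) := by
    intro u hu
    have hu0 : (0:ℝ) < u := lt_trans two_pos hu
    rw [hKeq, (hasDerivAt_besselJ ν 0 hu0).deriv]
  intro a ha b hb hab
  simp only
  rw [e a ha, e b hb]
  exact hg ha hb hab
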